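/- arXiv:2212.02596 — 2 statements merged into one kernel-verified Lean document; each statement's English description precedes it below -/
import Mathlib

section
/- Let X be a real Banach space with topological dual X*, and let T : X ⇉ X* be a set-valued operator, identified with its graph in X × X*. If T is monotone and the zero functional 0 ∈ X* belongs to T(x) for every x in the domain of T, then T is contained in the normal cone operator N_C of the set C = cl conv (dom T), the closed convex hull of the domain of T; that is, for every (x, x*) in the graph of T, x ∈ C and ⟨y − x, x*⟩ ≤ 0 for all y ∈ C. -/
open Set

noncomputable section

variable {X : Type*} [NormedAddCommGroup X] [NormedSpace ℝ X]

/-- Monotonicity of a set-valued operator `T : X ⇉ X*`, identified with its graph. -/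
def MonotoneGraph (T : Set (X × (X →L[ℝ] ℝ))) : Prop :=
  ∀ p ∈ T, ∀ q ∈ T, 0 ≤ (p.2 - q.2) (p.1 - q.1)

/-- Maximal monotonicity: monotone and not properly contained in any monotone graph. -/
def MaximalMonotoneGraph (T : Set (X × (X →L[ℝ] ℝ))) : Prop :=
  MonotoneGraph T ∧ ∀ S : Set (X × (X →L[ℝ] ℝ)), MonotoneGraph S → T ⊆ S → S = T

/-- Domain of a set-valued operator given by its graph. -/
def graphDom (T : Set (X × (X →L[ℝ] ℝ))) : Set X := {x | ∃ u, (x, u) ∈ T}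

/-- Range of a set-valued operator given by its graph. -/
def graphRange (T : Set (X × (X →L[ℝ] ℝ))) : Set (X →L[ℝ] ℝ) := {u | ∃ x, (x, u) ∈ T}

/-- The normal cone operator `N_C : X ⇉ X*` of a set `C ⊆ X`, as a graph. -/
def normalConeGraph (C : Set X) : Set (X × (X →L[ℝ] ℝ)) :=
  {p | p.1 ∈ C ∧ ∀ y ∈ C, p.2 (y - p.1) ≤ 0}

/-- The Fenchel subdifferential operator `∂f : X ⇉ X*` of `f : X → ℝ ∪ {+∞}`, as a graph. -/
def subdiffGraph (f : X → EReal) : Set (X × (X →L[ℝ] ℝ)) :=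
  {p | ∀ y : X, f p.1 + ((p.2 (y - p.1) : ℝ) : EReal) ≤ f y}

/-- `f` is proper: never `−∞` and not identically `+∞`. -/
def ProperFn (f : X → EReal) : Prop := (∀ x, f x ≠ ⊥) ∧ ∃ x, f x ≠ ⊤

/-- Convexity of an extended-real-valued functional. -/
def ConvexFn (f : X → EReal) : Prop :=
  ∀ x y : X, ∀ t : ℝ, 0 ≤ t → t ≤ 1 →
    f (t • x + (1 - t) • y) ≤ (t : EReal) * f x + ((1 - t : ℝ) : EReal) * f y

/-- Positive homogeneity: `f (c • x) = c * f x` for `c ≥ 0` and `f x` finite. -/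
def PosHomFn (f : X → EReal) : Prop :=
  ∀ x : X, f x ≠ ⊤ → ∀ c : ℝ, 0 ≤ c → f (c • x) = (c : EReal) * f x

/-- The epigraph of `f : X → ℝ ∪ {+∞}`. -/
def Epi (f : X → EReal) : Set (X × ℝ) := {p | f p.1 ≤ (p.2 : EReal)}

/-- Duality pairing between `X × ℝ` and `X* × ℝ`. -/
def pairXR (p : X × ℝ) (q : (X →L[ℝ] ℝ) × ℝ) : ℝ := q.1 p.1 + p.2 * q.2

/-- Monotonicity of an operator `A : X × ℝ ⇉ X* × ℝ`, identified with its graph. -/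
def MonotoneGraphXR (A : Set ((X × ℝ) × ((X →L[ℝ] ℝ) × ℝ))) : Prop :=
  ∀ p ∈ A, ∀ q ∈ A, 0 ≤ pairXR (p.1 - q.1) (p.2 - q.2)

/-- Domain of an operator `A : X × ℝ ⇉ X* × ℝ`. -/
def graphDomXR (A : Set ((X × ℝ) × ((X →L[ℝ] ℝ) × ℝ))) : Set (X × ℝ) :=
  {c | ∃ u, (c, u) ∈ A}

/-- The normal cone operator of a subset of `X × ℝ`, as a graph. -/
def normalConeGraphXR (C : Set (X × ℝ)) : Set ((X × ℝ) × ((X →L[ℝ] ℝ) × ℝ)) :=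
  {p | p.1 ∈ C ∧ ∀ d ∈ C, pairXR (d - p.1) p.2 ≤ 0}

/-- The operator `A_X : X ⇉ X*` induced by `A : X × ℝ ⇉ X* × ℝ`. -/
def inducedGraph (A : Set ((X × ℝ) × ((X →L[ℝ] ℝ) × ℝ))) : Set (X × (X →L[ℝ] ℝ)) :=
  {p | ∃ lam : ℝ, ((p.1, lam), (p.2, (-1 : ℝ))) ∈ A}

/-- `d` belongs to the recession cone of `C`, i.e. `C + ℝ₊ d = C` (as a set equality). -/
def recessionEq {Y : Type*} [AddCommGroup Y] [Module ℝ Y] (C : Set Y) (d : Y) : Prop :=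
  {y | ∃ c ∈ C, ∃ t : ℝ, 0 ≤ t ∧ y = c + t • d} = C

theorem MonotoneGraph.apply_le_of_mem_zero {T : Set (X × (X →L[ℝ] ℝ))} (hT : MonotoneGraph T)
    {x z : X} {u : X →L[ℝ] ℝ} (hxu : (x, u) ∈ T) (hz : (z, 0) ∈ T) : u z ≤ u x := by
  have h := hT _ hxu _ hz
  simp only [sub_zero, map_sub] at h
  linarith

theorem closure_convexHull_subset_setOf_le {E : Type*} [AddCommGroup E] [Module ℝ E]
    [TopologicalSpace E] {s : Set E} (f : E →L[ℝ] ℝ) {c : ℝ}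
    (hs : s ⊆ {z | f z ≤ c}) : closure (convexHull ℝ s) ⊆ {z | f z ≤ c} :=
  closure_minimal (convexHull_min hs (convex_halfSpace_le f.toLinearMap.isLinear c))
    (isClosed_le f.continuous continuous_const)

theorem monotone_zero_subset_normalCone_general
    {X : Type*} [NormedAddCommGroup X] [NormedSpace ℝ X]
    (T : Set (X × (X →L[ℝ] ℝ)))
    (hmono : MonotoneGraph T)
    (h0 : ∀ x ∈ graphDom T, (x, (0 : X →L[ℝ] ℝ)) ∈ T) :
    T ⊆ normalConeGraph (closure (convexHull ℝ (graphDom T))) := by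
  rintro ⟨x, u⟩ hxu
  have hx : x ∈ graphDom T := ⟨u, hxu⟩
  refine ⟨subset_closure (subset_convexHull ℝ _ hx), fun y hy => ?_⟩
  have hle : u y ≤ u x :=
    closure_convexHull_subset_setOf_le u (fun z hz => hmono.apply_le_of_mem_zero hxu (h0 z hz)) hy
  rw [map_sub]
  linarith

/-- a monotone operator containing the zero functional at every point of
its domain is contained in the normal cone operator of the closed convex hull of its domain. -/
theorem monotone_zero_subset_normalCone
    {X : Type*} [NormedAddCommGroup X] [NormedSpace ℝ X] [CompleteSpace X]
    (T : Set (X × (X →L[ℝ] ℝ)))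
    (hmono : MonotoneGraph T)
    (h0 : ∀ x ∈ graphDom T, (x, (0 : X →L[ℝ] ℝ)) ∈ T) :
    T ⊆ normalConeGraph (closure (convexHull ℝ (graphDom T))) :=
  monotone_zero_subset_normalCone_general T hmono h0
end
end

section
/- Let X be a real Banach space with topological dual X*, and let T : X ⇉ X* be a set-valued operator identified with its graph. There exists a nonempty closed convex set C ⊆ X such that T = N_C (the normal cone operator of C) if and only if T is maximally monotone and the zero functional 0 ∈ X* belongs to T(x) for every x in the domain of T. -/
open Set

noncomputable section

variable {X : Type*} [NormedAddCommGroup X] [NormedSpace ℝ X]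

/-!
If `x ∉ C`, completeness of `X` yields (Ekeland's variational principle, then a separation of
`C - z` from the open cone `{v | ε ‖v‖ < f v}`) a support point `z ∈ C` with a normal `w` such
that `w (x - z) > 0`. Pairing `(x, u)` with `(z, t • w)` for large `t` contradicts monotonicity,
so `N_C` is maximally monotone. Conversely, if `0 ∈ T x` on `dom T`, monotonicity says that
every `u ∈ T x` is normal at `x` to the closed convex hull of `dom T`, and maximality upgrades
this inclusion `T ⊆ N_C` to an equality.
-/

open Filter Metric Topology

section Ekeland

variable {α : Type*} [MetricSpace α]

def ekelandSet (F : α → ℝ) (ε : ℝ) (x : α) : Set α := {y | F y + ε * dist y x ≤ F x}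

variable {F : α → ℝ} {ε : ℝ}

lemma self_mem_ekelandSet (x : α) : x ∈ ekelandSet F ε x := by
  simp [ekelandSet]

lemma ekelandSet_subset (hε : 0 ≤ ε) {x y : α} (hy : y ∈ ekelandSet F ε x) :
    ekelandSet F ε y ⊆ ekelandSet F ε x := fun w hw => by
  have := mul_le_mul_of_nonneg_left (dist_triangle w y x) hε
  simp only [ekelandSet, mem_ofPred_eq] at hy hw ⊢
  linarith

lemma isClosed_ekelandSet (hF : LowerSemicontinuous F) (x : α) :
    IsClosed (ekelandSet F ε x) :=
  (hF.add (continuous_const.mul (continuous_id.dist continuous_const)).lowerSemicontinuous)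
    |>.isClosed_preimage (F x)

lemma exists_mem_ekelandSet_subset_closedBall (hε : 0 < ε) (hF : BddBelow (range F)) (x : α)
    {r : ℝ} (hr : 0 < r) : ∃ y ∈ ekelandSet F ε x, ekelandSet F ε y ⊆ closedBall y r := by
  set m := sInf (F '' ekelandSet F ε x)
  obtain ⟨_, ⟨y, hy, rfl⟩, hym⟩ := exists_lt_of_csInf_lt ⟨_, mem_image_of_mem F
    (self_mem_ekelandSet x)⟩ (lt_add_of_pos_right m (mul_pos hε hr))
  refine ⟨y, hy, fun w hw => ?_⟩
  have hmw : m ≤ F w :=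
    csInf_le (hF.mono (image_subset_range _ _)) (mem_image_of_mem F (ekelandSet_subset hε.le hy hw))
  simp only [ekelandSet, mem_ofPred_eq] at hw
  exact le_of_mul_le_mul_left (by linarith) hε

/-- Ekeland's variational principle. -/
theorem LowerSemicontinuous.exists_forall_le_add_mul_dist [CompleteSpace α]
    (hF : LowerSemicontinuous F) (hbdd : BddBelow (range F)) (hε : 0 < ε) (x₀ : α) :
    ∃ z, F z + ε * dist z x₀ ≤ F x₀ ∧ ∀ y, F z ≤ F y + ε * dist y z := by
  choose next hnext hball using fun (n : ℕ) x =>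
    exists_mem_ekelandSet_subset_closedBall hε hbdd x (Nat.one_div_pos_of_nat (n := n))
  let x : ℕ → α := fun n => Nat.rec x₀ next n
  set s : ℕ → Set α := fun n => ekelandSet F ε (x (n + 1))
  have hanti : Antitone fun n => ekelandSet F ε (x n) :=
    antitone_nat_of_succ_le fun n => ekelandSet_subset hε.le (hnext n (x n))
  have hbounded : ∀ n, Bornology.IsBounded (s n) := fun n =>
    isBounded_closedBall.subset (hball n (x n))
  have hdiam : Tendsto (fun n => diam (s n)) atTop (𝓝 0) := by
    refine squeeze_zero (fun n => diam_nonneg)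
      (fun n => diam_le_of_subset_closedBall (by positivity) (hball n (x n))) ?_
    simpa using tendsto_one_div_add_atTop_nhds_zero_nat.const_mul (2 : ℝ)
  obtain ⟨z, hz⟩ := nonempty_iInter_of_nonempty_biInter (fun n => isClosed_ekelandSet hF _)
    hbounded (fun N => ⟨x (N + 1), mem_iInter₂.2 fun n hn =>
      hanti (Nat.succ_le_succ hn) (self_mem_ekelandSet _)⟩) hdiam
  rw [mem_iInter] at hz
  refine ⟨z, hanti (Nat.zero_le 1) (hz 0), fun y => ?_⟩
  by_contra! hy
  -- `y ∈ ekelandSet F ε z` lies in every `s n`, whose diameters shrink to `0`.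
  have hys : ∀ n, y ∈ s n := fun n => ekelandSet_subset hε.le (hz n) hy.le
  have hyz : dist y z ≤ 0 :=
    ge_of_tendsto' hdiam fun n => dist_le_diam_of_mem (hbounded n) (hys n) (hz n)
  rw [dist_le_zero.1 hyz, dist_self, mul_zero, add_zero] at hy
  exact hy.false

end Ekeland

lemma MonotoneGraph.apply_sub_nonpos {T : Set (X × (X →L[ℝ] ℝ))} (hT : MonotoneGraph T)
    {x y : X} {u : X →L[ℝ] ℝ} (hxu : (x, u) ∈ T) (hy : (y, 0) ∈ T) : u (y - x) ≤ 0 := by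
  have := hT _ hxu _ hy
  rw [sub_zero] at this
  rw [← neg_sub, map_neg]
  exact neg_nonpos.2 this

lemma MaximalMonotoneGraph.nonempty {T : Set (X × (X →L[ℝ] ℝ))}
    (hT : MaximalMonotoneGraph T) : T.Nonempty := by
  rw [nonempty_iff_ne_empty]
  rintro rfl
  have hmono : MonotoneGraph ({(0, 0)} : Set (X × (X →L[ℝ] ℝ))) := by
    rintro _ rfl _ rfl
    simp
  exact singleton_ne_empty _ (hT.2 _ hmono (empty_subset _))

lemma zero_mem_normalConeGraph {C : Set X} {x : X} (hx : x ∈ C) :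
    (x, (0 : X →L[ℝ] ℝ)) ∈ normalConeGraph C :=
  ⟨hx, fun _ _ => le_rfl⟩

lemma smul_mem_normalConeGraph {C : Set X} {z : X} {w : X →L[ℝ] ℝ}
    (h : (z, w) ∈ normalConeGraph C) {t : ℝ} (ht : 0 ≤ t) : (z, t • w) ∈ normalConeGraph C :=
  ⟨h.1, fun y hy => mul_nonpos_of_nonneg_of_nonpos ht (h.2 y hy)⟩

lemma mem_normalConeGraph_closure_convexHull {D : Set X} {x : X} {u : X →L[ℝ] ℝ}
    (hx : x ∈ closure (convexHull ℝ D)) (hu : ∀ y ∈ D, u (y - x) ≤ 0) :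
    (x, u) ∈ normalConeGraph (closure (convexHull ℝ D)) := by
  have hhalf : closure (convexHull ℝ D) ⊆ {y | u y ≤ u x} :=
    closure_minimal (convexHull_min (fun y hy => by simpa [map_sub] using hu y hy)
      (convex_halfSpace_le u.isLinear (u x))) (isClosed_le u.continuous continuous_const)
  exact ⟨hx, fun y hy => by simpa [map_sub] using hhalf hy⟩

lemma normalConeGraph_monotone (C : Set X) : MonotoneGraph (normalConeGraph C) := by
  rintro ⟨x, u⟩ ⟨hx, hu⟩ ⟨y, v⟩ ⟨hy, hv⟩
  have h1 := hu y hy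
  have h2 := hv x hx
  simp only [sub_apply, map_sub] at *
  linarith

lemma exists_mem_normalConeGraph_pos_of_le_mul_norm {C : Set X} (hconv : Convex ℝ C) {z : X}
    (hz : z ∈ C) {f : X →L[ℝ] ℝ} {ε : ℝ} (hε : 0 ≤ ε)
    (hf : ∀ y ∈ C, f (y - z) ≤ ε * ‖y - z‖) {v : X} (hv : ε * ‖v‖ < f v) :
    ∃ w : X →L[ℝ] ℝ, (z, w) ∈ normalConeGraph C ∧ 0 < w v := by
  set U := {v : X | ε * ‖v‖ < f v}
  have hUconv : Convex ℝ U := by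
    have := (((convexOn_norm convex_univ).smul hε).sub
      ((f : X →ₗ[ℝ] ℝ).concaveOn convex_univ)).convex_lt 0
    simpa [U, sub_neg] using this
  have hUopen : IsOpen U := isOpen_lt (by fun_prop) f.continuous
  have hdisj : Disjoint U ((z + ·) ⁻¹' C) :=
    disjoint_left.2 fun d hdU hdC => (hf _ hdC).not_gt (by simpa [U] using hdU)
  obtain ⟨g, s, hgU, hgC⟩ :=
    geometric_hahn_banach_open hUconv hUopen (hconv.translate_preimage_right z) hdisj
  have hs_nonpos : s ≤ 0 := by simpa using hgC 0 (by simpa using hz)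
  -- `U` is a cone, so `g < s` on `U` forces `0 ≤ s`.
  have hs_nonneg : 0 ≤ s := by
    by_contra! hs
    have hgv : g v < s := hgU v hv
    have hτ : 0 < s / g v := div_pos_of_neg_of_neg hs (hgv.trans hs)
    have hτv : (s / g v) • v ∈ U := by
      simp only [U, mem_ofPred_eq, norm_smul, map_smul, smul_eq_mul, Real.norm_of_nonneg hτ.le]
      nlinarith
    have := hgU _ hτv
    rw [map_smul, smul_eq_mul, div_mul_cancel₀ _ (hgv.trans hs).ne] at this
    exact this.false
  refine ⟨-g, ⟨hz, fun y hy => ?_⟩, ?_⟩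
  · have := hgC (y - z) (by simpa using hy)
    simp only [neg_apply]
    linarith
  · have := hgU v hv
    simp only [neg_apply]
    linarith

theorem exists_mem_normalConeGraph_apply_sub_pos [CompleteSpace X] {C : Set X}
    (hne : C.Nonempty) (hcl : IsClosed C) (hconv : Convex ℝ C) {x : X} (hx : x ∉ C) :
    ∃ z w, (z, w) ∈ normalConeGraph C ∧ 0 < w (x - z) := by
  obtain ⟨f, u, hfC, hux⟩ := geometric_hahn_banach_closed_point hconv hcl hx
  have hbdd : BddAbove (f '' C) := ⟨u, forall_mem_image.2 fun y hy => (hfC y hy).le⟩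
  set α := sSup (f '' C)
  have hfα : ∀ y ∈ C, f y ≤ α := fun y hy => le_csSup hbdd (mem_image_of_mem f hy)
  set δ := f x - α
  have hδ : 0 < δ := sub_pos.2 <|
    (csSup_le (hne.image f) (forall_mem_image.2 fun y hy => (hfC y hy).le)).trans_lt hux
  obtain ⟨_, ⟨y₀, hy₀, rfl⟩, hy₀α⟩ :=
    exists_lt_of_lt_csSup (hne.image f) (show α - δ / 2 < α by linarith)
  set ε := δ / (2 * (‖x - y₀‖ + 1))
  have hε : 0 < ε := by positivity
  have hεx : ε * ‖x - y₀‖ < δ / 2 := by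
    rw [div_mul_eq_mul_div, div_lt_iff₀ (by positivity)]
    nlinarith
  have := hcl.completeSpace_coe
  obtain ⟨⟨z, hz⟩, hzy₀, hzC⟩ := LowerSemicontinuous.exists_forall_le_add_mul_dist
    (f.continuous.comp continuous_subtype_val).neg.lowerSemicontinuous
    ⟨-α, forall_mem_range.2 fun y => neg_le_neg (hfα y y.2)⟩ hε ⟨y₀, hy₀⟩
  simp only [Subtype.dist_eq, dist_eq_norm, Subtype.forall, Function.comp_apply, Pi.neg_apply]
    at hzy₀ hzC
  have hxz : ε * ‖x - z‖ < f (x - z) := calc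
    ε * ‖x - z‖ ≤ ε * ‖x - y₀‖ + ε * ‖z - y₀‖ := by
      rw [← mul_add, norm_sub_rev z y₀]
      exact mul_le_mul_of_nonneg_left (norm_sub_le_norm_sub_add_norm_sub x y₀ z) hε.le
    _ < δ / 2 + δ / 2 := by linarith [hfα z hz]
    _ ≤ f (x - z) := by rw [map_sub]; linarith [hfα z hz]
  obtain ⟨w, hw, hwx⟩ := exists_mem_normalConeGraph_pos_of_le_mul_norm hconv hz hε.le
    (fun y hy => by have := hzC y hy; rw [map_sub]; linarith) hxz
  exact ⟨z, w, hw, hwx⟩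

theorem maximalMonotoneGraph_normalConeGraph [CompleteSpace X] {C : Set X} (hne : C.Nonempty)
    (hcl : IsClosed C) (hconv : Convex ℝ C) : MaximalMonotoneGraph (normalConeGraph C) := by
  refine ⟨normalConeGraph_monotone C, fun S hS hCS => Subset.antisymm ?_ hCS⟩
  rintro ⟨x, u⟩ hxu
  have hx : x ∈ C := by
    by_contra hx
    obtain ⟨z, w, hzw, hwx⟩ := exists_mem_normalConeGraph_apply_sub_pos hne hcl hconv hx
    set t := (|u (x - z)| + 1) / w (x - z)
    have := hS _ hxu _ (hCS (smul_mem_normalConeGraph hzw (t := t) (by positivity)))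
    simp only [sub_apply, smul_apply, smul_eq_mul, div_mul_cancel₀ _ hwx.ne', t] at this
    linarith [le_abs_self (u (x - z))]
  exact ⟨hx, fun y hy => hS.apply_sub_nonpos hxu (hCS (zero_mem_normalConeGraph hy))⟩

/-- `T` is the normal cone operator of some nonempty closed convex set iff
`T` is maximally monotone and the zero functional belongs to `T(x)` for every `x ∈ dom T`. -/
theorem normalCone_iff_maximalMonotone_and_zero
    {X : Type*} [NormedAddCommGroup X] [NormedSpace ℝ X] [CompleteSpace X]
    (T : Set (X × (X →L[ℝ] ℝ))) :
    (∃ C : Set X, C.Nonempty ∧ IsClosed C ∧ Convex ℝ C ∧ T = normalConeGraph C) ↔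
      (MaximalMonotoneGraph T ∧ ∀ x ∈ graphDom T, (x, (0 : X →L[ℝ] ℝ)) ∈ T) := by
  constructor
  · rintro ⟨C, hne, hcl, hconv, rfl⟩
    exact ⟨maximalMonotoneGraph_normalConeGraph hne hcl hconv,
      fun x ⟨_, hx⟩ => zero_mem_normalConeGraph hx.1⟩
  · rintro ⟨hT, hzero⟩
    set C := closure (convexHull ℝ (graphDom T))
    have hdom : graphDom T ⊆ C := (subset_convexHull ℝ _).trans subset_closure
    have hTC : T ⊆ normalConeGraph C := fun p hp =>
      mem_normalConeGraph_closure_convexHull (hdom ⟨p.2, hp⟩)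
        fun y hy => hT.1.apply_sub_nonpos hp (hzero y hy)
    obtain ⟨p, hp⟩ := hT.nonempty
    exact ⟨C, ⟨p.1, hdom ⟨p.2, hp⟩⟩, isClosed_closure, (convex_convexHull ℝ _).closure,
      (hT.2 _ (normalConeGraph_monotone C) hTC).symm⟩
end
end
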